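/- The fundamental solution φ_{m,z,w} is differentiable on ℝ³∖{0} and satisfies the free Dirac equation there: for every x ∈ ℝ³ with x ≠ 0, −i( α₁ ∂₁φ_{m,z,w}(x) + α₂ ∂₂φ_{m,z,w}(x) + α₃ ∂₃φ_{m,z,w}(x) ) + m β φ_{m,z,w}(x) − z φ_{m,z,w}(x) = 0, where ∂_j denotes the partial derivative in the j-th coordinate direction. -/

import Mathlib

open Matrix Complex

noncomputable section

/-- Pauli matrix σ₁. -/
def sigma1 : Matrix (Fin 2) (Fin 2) ℂ := !![0, 1; 1, 0]

/-- Pauli matrix σ₂. -/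
def sigma2 : Matrix (Fin 2) (Fin 2) ℂ := !![0, -Complex.I; Complex.I, 0]

/-- Pauli matrix σ₃. -/
def sigma3 : Matrix (Fin 2) (Fin 2) ℂ := !![1, 0; 0, -1]

/-- The Dirac matrices α₁, α₂, α₃ in 2×2-block form `[[0, σⱼ],[σⱼ, 0]]`. -/
def diracAlpha : Fin 3 → Matrix (Fin 4) (Fin 4) ℂ :=
  ![Matrix.reindex finSumFinEquiv finSumFinEquiv (Matrix.fromBlocks 0 sigma1 sigma1 0),
    Matrix.reindex finSumFinEquiv finSumFinEquiv (Matrix.fromBlocks 0 sigma2 sigma2 0),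
    Matrix.reindex finSumFinEquiv finSumFinEquiv (Matrix.fromBlocks 0 sigma3 sigma3 0)]

/-- The Dirac matrix β = `[[I₂, 0],[0, −I₂]]`. -/
def diracBeta : Matrix (Fin 4) (Fin 4) ℂ :=
  Matrix.reindex finSumFinEquiv finSumFinEquiv
    (Matrix.fromBlocks (1 : Matrix (Fin 2) (Fin 2) ℂ) 0 0 (-1 : Matrix (Fin 2) (Fin 2) ℂ))

/-- α·x = x₁α₁ + x₂α₂ + x₃α₃. -/
def alphaDot (x : Fin 3 → ℝ) : Matrix (Fin 4) (Fin 4) ℂ :=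
  (x 0 : ℂ) • diracAlpha 0 + (x 1 : ℂ) • diracAlpha 1 + (x 2 : ℂ) • diracAlpha 2

/-- Euclidean inner product on ℝ³. -/
def inner3 (X Y : Fin 3 → ℝ) : ℝ := X 0 * Y 0 + X 1 * Y 1 + X 2 * Y 2

/-- Euclidean norm on ℝ³. -/
def norm3 (X : Fin 3 → ℝ) : ℝ := Real.sqrt (inner3 X X)

/-- Cross product on ℝ³. -/
def cross3 (X Y : Fin 3 → ℝ) : Fin 3 → ℝ :=
  ![X 1 * Y 2 - X 2 * Y 1, X 2 * Y 0 - X 0 * Y 2, X 0 * Y 1 - X 1 * Y 0]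

/-- γ₅ := −i α₁α₂α₃. -/
def gamma5 : Matrix (Fin 4) (Fin 4) ℂ :=
  (-Complex.I) • (diracAlpha 0 * diracAlpha 1 * diracAlpha 2)

/-- S·X := −γ₅ (α·X). -/
def sDot (X : Fin 3 → ℝ) : Matrix (Fin 4) (Fin 4) ℂ := -(gamma5 * alphaDot X)

/-- P₊ := (I₄ − iβ(α·ν))/2. -/
def Pplus (ν : Fin 3 → ℝ) : Matrix (Fin 4) (Fin 4) ℂ :=
  ((1 : ℂ) / 2) • (1 - Complex.I • (diracBeta * alphaDot ν))

/-- P₋ := (I₄ + iβ(α·ν))/2. -/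
def Pminus (ν : Fin 3 → ℝ) : Matrix (Fin 4) (Fin 4) ℂ :=
  ((1 : ℂ) / 2) • (1 + Complex.I • (diracBeta * alphaDot ν))

/-- λ := √(|ν × ξ|² + 1). -/
def lam (ν ξ : Fin 3 → ℝ) : ℝ :=
  Real.sqrt (inner3 (cross3 ν ξ) (cross3 ν ξ) + 1)

/-- Π₊ := (1/2)(I₄ + λ⁻¹(S·τ − iβ(α·ν))), τ = ν × ξ. -/
def Piplus (ν ξ : Fin 3 → ℝ) : Matrix (Fin 4) (Fin 4) ℂ :=
  ((1 : ℂ) / 2) •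
    (1 + ((lam ν ξ : ℂ))⁻¹ • (sDot (cross3 ν ξ) - Complex.I • (diracBeta * alphaDot ν)))

/-- Π₋ := (1/2)(I₄ − λ⁻¹(S·τ − iβ(α·ν))), τ = ν × ξ. -/
def Piminus (ν ξ : Fin 3 → ℝ) : Matrix (Fin 4) (Fin 4) ℂ :=
  ((1 : ℂ) / 2) •
    (1 - ((lam ν ξ : ℂ))⁻¹ • (sDot (cross3 ν ξ) - Complex.I • (diracBeta * alphaDot ν)))

/-- ρ₊ := (i⟨ν,ξ⟩ + λ)/s. -/
def rhoP (ν ξ : Fin 3 → ℝ) (s : ℝ) : ℂ :=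
  (Complex.I * (inner3 ν ξ : ℂ) + (lam ν ξ : ℂ)) / (s : ℂ)

/-- ρ₋ := (i⟨ν,ξ⟩ − λ)/s. -/
def rhoM (ν ξ : Fin 3 → ℝ) (s : ℝ) : ℂ :=
  (Complex.I * (inner3 ν ξ : ℂ) - (lam ν ξ : ℂ)) / (s : ℂ)

/-- L₀ := s⁻¹ (iα·ν)(α·ξ + β). -/
def L0 (ν ξ : Fin 3 → ℝ) (s : ℝ) : Matrix (Fin 4) (Fin 4) ℂ :=
  ((s : ℂ))⁻¹ • ((Complex.I • alphaDot ν) * (alphaDot ξ + diracBeta))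

/-- k₊ := (1 + λ⁻¹)/2. -/
def kPlus (ν ξ : Fin 3 → ℝ) : ℝ := (1 + (lam ν ξ)⁻¹) / 2

/-- k₋ := (1 − λ⁻¹)/2. -/
def kMinus (ν ξ : Fin 3 → ℝ) : ℝ := (1 - (lam ν ξ)⁻¹) / 2

/-- Θ := (2λ)⁻¹ S·τ, τ = ν × ξ. -/
def theta (ν ξ : Fin 3 → ℝ) : Matrix (Fin 4) (Fin 4) ℂ :=
  ((2 * lam ν ξ : ℝ) : ℂ)⁻¹ • sDot (cross3 ν ξ)

/-- The fundamental solution φ_{m,z,w} of the free Dirac operator. -/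
def phiFS (m : ℝ) (z w : ℂ) (x : Fin 3 → ℝ) : Matrix (Fin 4) (Fin 4) ℂ :=
  (Complex.exp (Complex.I * w * (norm3 x : ℂ)) / (4 * (Real.pi : ℂ) * (norm3 x : ℂ))) •
    (z • (1 : Matrix (Fin 4) (Fin 4) ℂ) + (m : ℂ) • diracBeta +
      ((1 - Complex.I * w * (norm3 x : ℂ)) * Complex.I / ((norm3 x : ℂ) ^ 2)) • alphaDot x)

attribute [local instance] Matrix.normedAddCommGroup Matrix.normedSpace

/-! The field is radial: `φ(x) = u(|x|) (z + mβ) + v(|x|) α·x` with `u(t) = e^{iwt}/(4πt)` and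
`v = -i u'/t`. The Clifford relations `(α·x)² = |x|²`, `α·x β = -β α·x`, `Σ αⱼ² = 3` reduce
`(-iα·∇ + mβ - z)φ` to the span of `1, β, α·x, (α·x)β`. The `α·x` and `(α·x)β` parts cancel
exactly because `v = -i u'/t`, the `β` part cancels trivially, and the scalar part is
`-(u'' + 2u'/t + w²u) = 0`, the radial Helmholtz equation satisfied by `u` since
`(t u)'' = -w² (t u)`. -/

open ContinuousLinearMap

lemma diracAlpha_zero : diracAlpha 0 = !![0, 0, 0, 1; 0, 0, 1, 0; 0, 1, 0, 0; 1, 0, 0, 0] := by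
  ext i j; fin_cases i <;> fin_cases j <;> rfl

lemma diracAlpha_one :
    diracAlpha 1 = !![0, 0, 0, -I; 0, 0, I, 0; 0, -I, 0, 0; I, 0, 0, 0] := by
  ext i j; fin_cases i <;> fin_cases j <;> rfl

lemma diracAlpha_two : diracAlpha 2 = !![0, 0, 1, 0; 0, 0, 0, -1; 1, 0, 0, 0; 0, -1, 0, 0] := by
  ext i j; fin_cases i <;> fin_cases j <;> rfl

lemma diracBeta_eq : diracBeta = !![1, 0, 0, 0; 0, 1, 0, 0; 0, 0, -1, 0; 0, 0, 0, -1] := by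
  ext i j; fin_cases i <;> fin_cases j <;> simp [diracBeta, finSumFinEquiv, Fin.addCases]

lemma diracAlpha_mul_self (j : Fin 3) : diracAlpha j * diracAlpha j = 1 := by
  fin_cases j <;>
    simp only [Fin.zero_eta, Fin.mk_one, Fin.reduceFinMk, diracAlpha_zero, diracAlpha_one,
      diracAlpha_two] <;>
    ext i k <;> fin_cases i <;> fin_cases k <;> simp [Matrix.mul_apply, Fin.sum_univ_four]

lemma diracBeta_mul_self : diracBeta * diracBeta = 1 := by
  rw [diracBeta_eq]
  ext i k; fin_cases i <;> fin_cases k <;> simp [Matrix.mul_apply, Fin.sum_univ_four]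

lemma diracAlpha_anticomm {j k : Fin 3} (h : j ≠ k) :
    diracAlpha j * diracAlpha k = -(diracAlpha k * diracAlpha j) := by
  fin_cases j <;> fin_cases k <;> (try exact absurd rfl h) <;>
    simp only [Fin.zero_eta, Fin.mk_one, Fin.reduceFinMk, diracAlpha_zero, diracAlpha_one,
      diracAlpha_two] <;>
    ext i l <;> fin_cases i <;> fin_cases l <;> simp [Matrix.mul_apply, Fin.sum_univ_four]

lemma diracAlpha_mul_diracBeta (j : Fin 3) :
    diracAlpha j * diracBeta = -(diracBeta * diracAlpha j) := by
  fin_cases j <;>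
    simp only [Fin.zero_eta, Fin.mk_one, Fin.reduceFinMk, diracAlpha_zero, diracAlpha_one,
      diracAlpha_two, diracBeta_eq] <;>
    ext i l <;> fin_cases i <;> fin_cases l <;> simp [Matrix.mul_apply, Fin.sum_univ_four]

def inner3L (x : Fin 3 → ℝ) : (Fin 3 → ℝ) →L[ℝ] ℝ :=
  x 0 • proj 0 + x 1 • proj 1 + x 2 • proj 2

def alphaDotL : (Fin 3 → ℝ) →L[ℝ] Matrix (Fin 4) (Fin 4) ℂ :=
  (proj 0).smulRight (diracAlpha 0) + (proj 1).smulRight (diracAlpha 1) +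
    (proj 2).smulRight (diracAlpha 2)

lemma coe_alphaDotL : ⇑alphaDotL = alphaDot := by
  ext1 y
  simp only [alphaDotL, alphaDot, _root_.add_apply, smulRight_apply, proj_apply, Complex.coe_smul]

lemma inner3_self_nonneg (x : Fin 3 → ℝ) : 0 ≤ inner3 x x := by
  simp only [inner3, ← sq]; positivity

lemma inner3_self_pos {x : Fin 3 → ℝ} (hx : x ≠ 0) : 0 < inner3 x x := by
  contrapose! hx
  have h : x 0 ^ 2 + x 1 ^ 2 + x 2 ^ 2 ≤ 0 := by simpa only [inner3, ← sq] using hx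
  ext j
  fin_cases j <;> simp <;> nlinarith [sq_nonneg (x 0), sq_nonneg (x 1), sq_nonneg (x 2)]

lemma norm3_pos {x : Fin 3 → ℝ} (hx : x ≠ 0) : 0 < norm3 x :=
  Real.sqrt_pos.2 (inner3_self_pos hx)

lemma hasFDerivAt_norm3 {x : Fin 3 → ℝ} (hx : x ≠ 0) :
    HasFDerivAt norm3 ((norm3 x)⁻¹ • inner3L x) x := by
  have hsq : HasFDerivAt (fun y => inner3 y y) ((2 : ℝ) • inner3L x) x := by
    have hp (j : Fin 3) := hasFDerivAt_apply (𝕜 := ℝ) j x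
    refine ((((hp 0).mul (hp 0)).add ((hp 1).mul (hp 1))).add ((hp 2).mul (hp 2))).congr_fderiv
      (ContinuousLinearMap.ext fun y => ?_)
    simp only [inner3L, _root_.add_apply, _root_.smul_apply, proj_apply, smul_eq_mul]
    ring
  refine ((Real.hasDerivAt_sqrt (inner3_self_pos hx).ne').comp_hasFDerivAt (h₂ := Real.sqrt)
    (f := fun y => inner3 y y) x hsq).congr_fderiv ?_
  rw [smul_smul]
  congr 1
  simp only [norm3]
  field_simp

lemma alphaDot_mul_self (x : Fin 3 → ℝ) :
    alphaDot x * alphaDot x = ((norm3 x : ℂ) ^ 2) • 1 := by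
  simp only [alphaDot, add_mul, mul_add, Matrix.smul_mul, Matrix.mul_smul, smul_smul,
    diracAlpha_mul_self, diracAlpha_anticomm (j := 1) (k := 0) (by decide),
    diracAlpha_anticomm (j := 2) (k := 0) (by decide),
    diracAlpha_anticomm (j := 2) (k := 1) (by decide)]
  rw [← Complex.ofReal_pow, norm3, Real.sq_sqrt (inner3_self_nonneg x)]
  match_scalars <;> push_cast [inner3] <;> ring

lemma alphaDot_mul_diracBeta (x : Fin 3 → ℝ) :
    alphaDot x * diracBeta = -(diracBeta * alphaDot x) := by
  simp only [alphaDot, add_mul, mul_add, Matrix.smul_mul, Matrix.mul_smul,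
    diracAlpha_mul_diracBeta, smul_neg, neg_add]

lemma differentiableAt_alphaDot (x : Fin 3 → ℝ) : DifferentiableAt ℝ alphaDot x :=
  coe_alphaDotL ▸ alphaDotL.differentiableAt

lemma fderiv_alphaDot_apply (x y : Fin 3 → ℝ) : fderiv ℝ alphaDot x y = alphaDot y := by
  rw [← coe_alphaDotL, alphaDotL.fderiv]

def radialSpinor (A : Matrix (Fin 4) (Fin 4) ℂ) (u v : ℝ → ℂ) (x : Fin 3 → ℝ) :
    Matrix (Fin 4) (Fin 4) ℂ :=
  u (norm3 x) • A + v (norm3 x) • alphaDot x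

section radialSpinor

variable (A : Matrix (Fin 4) (Fin 4) ℂ) {u v : ℝ → ℂ} {u' v' : ℂ} {x : Fin 3 → ℝ}

lemma differentiableAt_radialSpinor (hx : x ≠ 0) (hu : DifferentiableAt ℝ u (norm3 x))
    (hv : DifferentiableAt ℝ v (norm3 x)) : DifferentiableAt ℝ (radialSpinor A u v) x :=
  have hN := (hasFDerivAt_norm3 hx).differentiableAt
  ((hu.comp x hN).smul_const A).add ((hv.comp x hN).smul (differentiableAt_alphaDot x))

lemma fderiv_radialSpinor_apply (hx : x ≠ 0) (hu : HasDerivAt u u' (norm3 x))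
    (hv : HasDerivAt v v' (norm3 x)) (y : Fin 3 → ℝ) :
    fderiv ℝ (radialSpinor A u v) x y =
      (inner3 x y / norm3 x) • (u' • A + v' • alphaDot x) + v (norm3 x) • alphaDot y := by
  have hN := hasFDerivAt_norm3 hx
  have h : HasFDerivAt (radialSpinor A u v) _ x :=
    ((hu.hasFDerivAt.comp x hN).smul_const A).add
      ((hv.hasFDerivAt.comp x hN).smul (differentiableAt_alphaDot x).hasFDerivAt)
  rw [h.fderiv]
  -- The chain-rule derivative carries the topology of the local normed instance on matrices,
  -- `fderiv` here carries `instTopologicalSpaceMatrix`, so `simp` cannot evaluate it; it is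
  -- however definitionally the expected formula.
  change (((norm3 x)⁻¹ * inner3 x y) • u') • A +
    (v (norm3 x) • fderiv ℝ alphaDot x y + (((norm3 x)⁻¹ * inner3 x y) • v') • alphaDot x) = _
  rw [fderiv_alphaDot_apply]
  simp only [Complex.real_smul]
  module

end radialSpinor

lemma inner3_single (x : Fin 3 → ℝ) (j : Fin 3) : inner3 x (Pi.single j 1) = x j := by
  fin_cases j <;> simp [inner3]

lemma alphaDot_single (j : Fin 3) : alphaDot (Pi.single j 1) = diracAlpha j := by
  fin_cases j <;> simp [alphaDot]

lemma sum_diracAlpha_mul (x : Fin 3 → ℝ) (t : ℝ) (v : ℂ) (N : Matrix (Fin 4) (Fin 4) ℂ) :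
    diracAlpha 0 * ((x 0 / t) • N + v • diracAlpha 0) +
      diracAlpha 1 * ((x 1 / t) • N + v • diracAlpha 1) +
      diracAlpha 2 * ((x 2 / t) • N + v • diracAlpha 2) =
    (t : ℂ)⁻¹ • (alphaDot x * N) + (3 * v) • 1 := by
  simp only [alphaDot, mul_add, add_mul, Matrix.mul_smul, Matrix.smul_mul, diracAlpha_mul_self,
    Complex.coe_smul]
  module

def shiftedDiracOp (m : ℝ) (z : ℂ) (φ : (Fin 3 → ℝ) → Matrix (Fin 4) (Fin 4) ℂ)
    (x : Fin 3 → ℝ) : Matrix (Fin 4) (Fin 4) ℂ :=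
  (-Complex.I) • (diracAlpha 0 * fderiv ℝ φ x (Pi.single 0 1)
      + diracAlpha 1 * fderiv ℝ φ x (Pi.single 1 1)
      + diracAlpha 2 * fderiv ℝ φ x (Pi.single 2 1))
    + (m : ℂ) • (diracBeta * φ x) - z • φ x

lemma shiftedDiracOp_radialSpinor (m : ℝ) (z : ℂ) {u v : ℝ → ℂ} {u' v' : ℂ} {x : Fin 3 → ℝ}
    (hx : x ≠ 0) (hu : HasDerivAt u u' (norm3 x)) (hv : HasDerivAt v v' (norm3 x))
    (hvu : v (norm3 x) = -I * u' / norm3 x) :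
    shiftedDiracOp m z (radialSpinor (z • 1 + (m : ℂ) • diracBeta) u v) x =
      (-I * (norm3 x * v' + 3 * v (norm3 x)) + ((m : ℂ) ^ 2 - z ^ 2) * u (norm3 x)) • 1 := by
  have ht : (norm3 x : ℂ) ≠ 0 := Complex.ofReal_ne_zero.2 (norm3_pos hx).ne'
  simp only [shiftedDiracOp, fderiv_radialSpinor_apply _ hx hu hv, inner3_single, alphaDot_single,
    sum_diracAlpha_mul, radialSpinor]
  simp only [mul_add, Matrix.mul_smul, Matrix.mul_one,
    alphaDot_mul_self, diracBeta_mul_self, alphaDot_mul_diracBeta, smul_add, smul_smul]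
  match_scalars
  · rw [hvu]; ring
  · rw [hvu]; ring
  · field_simp; ring
  · ring

def helmholtzKernel (w : ℂ) (t : ℝ) : ℂ :=
  cexp (I * w * t) / (4 * Real.pi * t)

def phiAlphaCoeff (w : ℂ) (t : ℝ) : ℂ :=
  cexp (I * w * t) * ((1 - I * w * t) * I) / (4 * Real.pi * t ^ 3)

lemma phiFS_eq_radialSpinor (m : ℝ) (z w : ℂ) :
    phiFS m z w =
      radialSpinor (z • 1 + (m : ℂ) • diracBeta) (helmholtzKernel w) (phiAlphaCoeff w) := by
  ext1 x
  rw [phiFS, radialSpinor, smul_add, smul_smul, helmholtzKernel, phiAlphaCoeff, div_mul_div_comm]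
  ring_nf

section kernel

variable (w : ℂ) {t : ℝ}

lemma hasDerivAt_helmholtzKernel (ht : t ≠ 0) :
    HasDerivAt (helmholtzKernel w)
      (cexp (I * w * t) * (I * w * t - 1) / (4 * Real.pi * t ^ 2)) t := by
  have htC : (t : ℂ) ≠ 0 := Complex.ofReal_ne_zero.2 ht
  have h : HasDerivAt (fun y : ℂ => cexp (I * w * y) / (4 * Real.pi * y)) _ t :=
    ((hasDerivAt_id _).const_mul (I * w)).cexp.div ((hasDerivAt_id _).const_mul _)
      (by simp [htC, Real.pi_ne_zero])
  refine h.comp_ofReal.congr_deriv ?_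
  simp only [id]
  field_simp

lemma hasDerivAt_phiAlphaCoeff (ht : t ≠ 0) :
    HasDerivAt (phiAlphaCoeff w)
      (I * cexp (I * w * t) * (w ^ 2 * t ^ 2 - 3 + 3 * I * w * t) / (4 * Real.pi * t ^ 4)) t := by
  have htC : (t : ℂ) ≠ 0 := Complex.ofReal_ne_zero.2 ht
  have h : HasDerivAt
      (fun y : ℂ => cexp (I * w * y) * ((1 - I * w * y) * I) / (4 * Real.pi * y ^ 3)) _ t :=
    (((hasDerivAt_id _).const_mul (I * w)).cexp.mul
      ((((hasDerivAt_id _).const_mul (I * w)).const_sub 1).mul_const I)).div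
      ((hasDerivAt_pow 3 _).const_mul _) (by simp [htC, Real.pi_ne_zero])
  refine h.comp_ofReal.congr_deriv ?_
  simp only [id, Pi.mul_apply]
  field_simp
  linear_combination (-w ^ 2 * (t : ℂ) ^ 4) * I_sq

lemma phiAlphaCoeff_eq_deriv (ht : t ≠ 0) :
    phiAlphaCoeff w t = -I * deriv (helmholtzKernel w) t / t := by
  rw [(hasDerivAt_helmholtzKernel w ht).deriv, phiAlphaCoeff]
  field_simp
  ring

-- With `v = -i u'/t` this is the radial Helmholtz equation `u'' + 2u'/t + w²u = 0`.
lemma radial_helmholtz_equation (ht : t ≠ 0) :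
    t * deriv (phiAlphaCoeff w) t + 3 * phiAlphaCoeff w t = I * w ^ 2 * helmholtzKernel w t := by
  have htC : (t : ℂ) ≠ 0 := Complex.ofReal_ne_zero.2 ht
  rw [(hasDerivAt_phiAlphaCoeff w ht).deriv, phiAlphaCoeff, helmholtzKernel]
  field_simp
  ring

end kernel

theorem stmt17_general (m : ℝ) (z w : ℂ) (hw : w ^ 2 = z ^ 2 - (m : ℂ) ^ 2) :
    DifferentiableOn ℝ (phiFS m z w) {x : Fin 3 → ℝ | x ≠ 0} ∧
    ∀ x : Fin 3 → ℝ, x ≠ 0 →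
      (-Complex.I) • (diracAlpha 0 * fderiv ℝ (phiFS m z w) x (Pi.single 0 1)
          + diracAlpha 1 * fderiv ℝ (phiFS m z w) x (Pi.single 1 1)
          + diracAlpha 2 * fderiv ℝ (phiFS m z w) x (Pi.single 2 1))
        + (m : ℂ) • (diracBeta * phiFS m z w x) - z • phiFS m z w x = 0 := by
  rw [phiFS_eq_radialSpinor]
  refine ⟨fun x hx => ?_, fun x hx => ?_⟩
  all_goals
    have ht := (norm3_pos hx).ne'
    have hu := (hasDerivAt_helmholtzKernel w ht).differentiableAt
    have hv := (hasDerivAt_phiAlphaCoeff w ht).differentiableAt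
  · exact (differentiableAt_radialSpinor _ hx hu hv).differentiableWithinAt
  · change shiftedDiracOp m z _ x = 0
    rw [shiftedDiracOp_radialSpinor m z hx hu.hasDerivAt hv.hasDerivAt
      (phiAlphaCoeff_eq_deriv w ht), radial_helmholtz_equation w ht]
    refine smul_eq_zero_of_left ?_ 1
    linear_combination
      (-w ^ 2 * helmholtzKernel w (norm3 x)) * I_sq + helmholtzKernel w (norm3 x) * hw

theorem stmt17 (m : ℝ) (hm : 0 < m) (z w : ℂ) (hw : w ^ 2 = z ^ 2 - (m : ℂ) ^ 2) :
    DifferentiableOn ℝ (phiFS m z w) {x : Fin 3 → ℝ | x ≠ 0} ∧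
    ∀ x : Fin 3 → ℝ, x ≠ 0 →
      (-Complex.I) • (diracAlpha 0 * fderiv ℝ (phiFS m z w) x (Pi.single 0 1)
          + diracAlpha 1 * fderiv ℝ (phiFS m z w) x (Pi.single 1 1)
          + diracAlpha 2 * fderiv ℝ (phiFS m z w) x (Pi.single 2 1))
        + (m : ℂ) • (diracBeta * phiFS m z w x) - z • phiFS m z w x = 0 :=
  stmt17_general m z w hw

end
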